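/- arXiv:0712.4224 — 5 statements merged into one kernel-verified Lean document; each statement's English description precedes it below -/
import Mathlib

section
/- For any pairwise-type comparison process with odd comparison function f (the difference of reproductive fitnesses being f applied to the payoff difference) and with Φ_A + Φ_B = 1, the average drift in the Battle of the Sexes equals the neutral-evolution drift 1/(18N²), independent of the selection strength w. -/
/-!
Under the reflection `y ↦ 1 - y` the weight `y (1 - y)` is invariant, while `2y - 1` and, by
oddness of `f`, `f (2 (2y - 1))` change sign; so for every `x` the selection part of the drift
integrand is odd about `y = 1/2` and integrates to zero. Only the neutral term
`2 (∫₀¹ y (1 - y) dy)² / N² = 1 / (18 N²)` survives.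
-/

open intervalIntegral

theorem intervalIntegral.integral_eq_zero_of_reflect_eq_neg {E : Type*} [NormedAddCommGroup E]
    [NormedSpace ℝ E] {a b : ℝ} {F : ℝ → E} (hF : ∀ y, F (a + b - y) = -F y) :
    ∫ y in a..b, F y = 0 := by
  have h : ∫ y in a..b, F y = -∫ y in a..b, F y := by
    calc ∫ y in a..b, F y = ∫ y in a..b, F (a + b - y) := by
          rw [integral_comp_sub_left]; simp
      _ = -∫ y in a..b, F y := by simp only [hF, integral_neg]
  rwa [eq_neg_iff_add_eq_zero, ← two_smul ℝ, smul_eq_zero, or_iff_right two_ne_zero] at h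

theorem integral_mul_one_sub_self : ∫ y in (0:ℝ)..1, y * (1 - y) = 1 / 6 := by
  simp only [mul_sub, mul_one, ← sq]
  rw [integral_sub intervalIntegrable_id (intervalIntegrable_pow 2), integral_id, integral_pow]
  norm_num

theorem pairwise_drift_eq_neutral_general (f : ℝ → ℝ) (hf : ∀ t : ℝ, f (-t) = - f t)
    (N : ℝ) :
    (1 / N) * (∫ x in (0:ℝ)..1, ∫ y in (0:ℝ)..1,
        x * (1 - x) * y * (1 - y) *
          ((2 * x - 1) * f (2 * (2 * y - 1)) + (2 * y - 1) * f (-2 * (2 * x - 1))))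
    + (1 / N ^ 2) * (∫ x in (0:ℝ)..1, ∫ y in (0:ℝ)..1,
        x * (1 - x) * y * (1 - y) * 2)
    = 1 / (18 * N ^ 2) := by
  have selection_zero (x : ℝ) : ∫ y in (0:ℝ)..1, x * (1 - x) * y * (1 - y) *
      ((2 * x - 1) * f (2 * (2 * y - 1)) + (2 * y - 1) * f (-2 * (2 * x - 1))) = 0 := by
    refine integral_eq_zero_of_reflect_eq_neg fun y => ?_
    rw [show 2 * (2 * (0 + 1 - y) - 1) = -(2 * (2 * y - 1)) by ring, hf]
    ring
  have neutral_inner (x : ℝ) :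
      ∫ y in (0:ℝ)..1, x * (1 - x) * y * (1 - y) * 2 = 2 * (x * (1 - x)) * (1 / 6) := by
    rw [← integral_mul_one_sub_self, ← integral_const_mul]
    congr 1 with y
    ring
  simp only [selection_zero, neutral_inner, integral_zero, integral_const_mul,
    integral_mul_const, integral_mul_one_sub_self]
  ring

/-- For any pairwise comparison process with odd comparison function f
(so Φ_A - Φ_B = f(π_A - π_B)) and Φ_A + Φ_B = 1 in each population, the average drift
in the Battle of the Sexes equals the neutral drift 1/(18N²), independent of f. -/
theorem pairwise_drift_eq_neutral (f : ℝ → ℝ) (hf : ∀ t : ℝ, f (-t) = - f t)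
    (N : ℝ) (hN : 0 < N) :
    (1 / N) * (∫ x in (0:ℝ)..1, ∫ y in (0:ℝ)..1,
        x * (1 - x) * y * (1 - y) *
          ((2 * x - 1) * f (2 * (2 * y - 1)) + (2 * y - 1) * f (-2 * (2 * x - 1))))
    + (1 / N ^ 2) * (∫ x in (0:ℝ)..1, ∫ y in (0:ℝ)..1,
        x * (1 - x) * y * (1 - y) * 2)
    = 1 / (18 * N ^ 2) :=
  pairwise_drift_eq_neutral_general f hf N
end

section
/- For the linearized Moran process in the Battle of the Sexes, the average drift equals 1/(18N²) for all selection strengths w, i.e. the order-1/N term vanishes and the diffusion term is unaffected by the game. -/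
/-!
With payoffs `π_A^♂ = 2y - 1`, `π_B^♂ = 1 - 2y`, `π_A^♀ = 1 - 2x`, `π_B^♀ = 2x - 1`, the fitness
differences are `w (2y - 1)` for males and `-w (2x - 1)` for females, so the order-`1/N` integrand
`(2x - 1) w (2y - 1) - (2y - 1) w (2x - 1)` vanishes identically. The mean payoffs of the two
populations are opposite, `±(2x - 1)(2y - 1)`, so the four linearized fitnesses always sum to `2`,
and the order-`1/N²` term is `2 (∫₀¹ x (1 - x) dx)² = 2 / 36`.
-/

open intervalIntegral

theorem intervalIntegral_integral_mul {f g : ℝ → ℝ} (a b c d : ℝ) :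
    ∫ x in a..b, ∫ y in c..d, f x * g y = (∫ x in a..b, f x) * ∫ y in c..d, g y := by
  simp only [integral_const_mul, integral_mul_const]

theorem integral_mul_one_sub : ∫ x in (0:ℝ)..1, x * (1 - x) = 1 / 6 := by
  have expand : ∫ x in (0:ℝ)..1, x * (1 - x) = ∫ x in (0:ℝ)..1, (x - x ^ 2) := by
    congr 1
    ext x
    ring
  rw [expand, integral_sub intervalIntegrable_id (intervalIntegrable_pow 2), integral_id, integral_pow]
  norm_num

theorem battleOfSexes_selection_cancels (w x y : ℝ) :
    (2 * x - 1) *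
        ((1 + w * ((2 * y - 1) - (2 * x - 1) * (2 * y - 1))) / 2
          - (1 + w * ((1 - 2 * y) - (2 * x - 1) * (2 * y - 1))) / 2)
      + (2 * y - 1) *
        ((1 + w * ((1 - 2 * x) - (-((2 * x - 1) * (2 * y - 1))))) / 2
          - (1 + w * ((2 * x - 1) - (-((2 * x - 1) * (2 * y - 1))))) / 2) = 0 := by
  ring

theorem battleOfSexes_fitness_sum (w x y : ℝ) :
    (1 + w * ((2 * y - 1) - (2 * x - 1) * (2 * y - 1))) / 2
      + (1 + w * ((1 - 2 * y) - (2 * x - 1) * (2 * y - 1))) / 2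
      + (1 + w * ((1 - 2 * x) - (-((2 * x - 1) * (2 * y - 1))))) / 2
      + (1 + w * ((2 * x - 1) - (-((2 * x - 1) * (2 * y - 1))))) / 2 = 2 := by
  ring

theorem linearized_moran_drift_general (w N : ℝ) :
    (1 / N) * (∫ x in (0:ℝ)..1, ∫ y in (0:ℝ)..1,
        x * (1 - x) * y * (1 - y) *
          ((2 * x - 1) *
              ((1 + w * ((2 * y - 1) - (2 * x - 1) * (2 * y - 1))) / 2
                - (1 + w * ((1 - 2 * y) - (2 * x - 1) * (2 * y - 1))) / 2)
            + (2 * y - 1) *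
              ((1 + w * ((1 - 2 * x) - (-((2 * x - 1) * (2 * y - 1))))) / 2
                - (1 + w * ((2 * x - 1) - (-((2 * x - 1) * (2 * y - 1))))) / 2)))
    + (1 / N ^ 2) * (∫ x in (0:ℝ)..1, ∫ y in (0:ℝ)..1,
        x * (1 - x) * y * (1 - y) *
          ((1 + w * ((2 * y - 1) - (2 * x - 1) * (2 * y - 1))) / 2
            + (1 + w * ((1 - 2 * y) - (2 * x - 1) * (2 * y - 1))) / 2
            + (1 + w * ((1 - 2 * x) - (-((2 * x - 1) * (2 * y - 1))))) / 2
            + (1 + w * ((2 * x - 1) - (-((2 * x - 1) * (2 * y - 1))))) / 2))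
    = 1 / (18 * N ^ 2) := by
  have separate : ∀ x y : ℝ,
      x * (1 - x) * y * (1 - y) * 2 = (2 * (x * (1 - x))) * (y * (1 - y)) := fun x y => by ring
  simp only [battleOfSexes_selection_cancels, battleOfSexes_fitness_sum, mul_zero, integral_zero,
    separate]
  rw [intervalIntegral_integral_mul, integral_const_mul, integral_mul_one_sub]
  ring

/-- For the linearized Moran process Φ_s = ½(1 + w(π_s − ⟨π⟩)) in the Battle of the Sexes,
the average drift equals 1/(18N²) for all selection strengths w. -/
theorem linearized_moran_drift (w N : ℝ) (hN : 0 < N) :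
    (1 / N) * (∫ x in (0:ℝ)..1, ∫ y in (0:ℝ)..1,
        x * (1 - x) * y * (1 - y) *
          ((2 * x - 1) *
              ((1 + w * ((2 * y - 1) - (2 * x - 1) * (2 * y - 1))) / 2
                - (1 + w * ((1 - 2 * y) - (2 * x - 1) * (2 * y - 1))) / 2)
            + (2 * y - 1) *
              ((1 + w * ((1 - 2 * x) - (-((2 * x - 1) * (2 * y - 1))))) / 2
                - (1 + w * ((2 * x - 1) - (-((2 * x - 1) * (2 * y - 1))))) / 2)))
    + (1 / N ^ 2) * (∫ x in (0:ℝ)..1, ∫ y in (0:ℝ)..1,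
        x * (1 - x) * y * (1 - y) *
          ((1 + w * ((2 * y - 1) - (2 * x - 1) * (2 * y - 1))) / 2
            + (1 + w * ((1 - 2 * y) - (2 * x - 1) * (2 * y - 1))) / 2
            + (1 + w * ((1 - 2 * x) - (-((2 * x - 1) * (2 * y - 1))))) / 2
            + (1 + w * ((2 * x - 1) - (-((2 * x - 1) * (2 * y - 1))))) / 2))
    = 1 / (18 * N ^ 2) :=
  linearized_moran_drift_general w N
end

section
/- For the frequency-dependent Moran process in the Battle of the Sexes, (2x-1)(Φ_A^♂-Φ_B^♂) + (2y-1)(Φ_A^♀-Φ_B^♀) = -2w²⟨π^♂⟩(2x-1)(2y-1)/((1-w)² - w²⟨π^♂⟩²) = -2w²(2x-1)²(2y-1)²/((1-w)² - w²(2x-1)²(2y-1)²), which is ≤ 0 on [0,1]² when 0 < w < 1/2. -/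
/-! With `p = (2x-1)(2y-1) = ⟨π^♂⟩`, the baseline fitness `1 - w` cancels in each difference
`Φ_A - Φ_B`, so the combination collapses to `w p / (1 - w + w p) - w p / (1 - w - w p)`.
Both denominators are positive because `|p| ≤ 1` and `w < 1/2`, and the difference of the two
fractions is `-2 w² p² / ((1 - w)² - w² p²)`, visibly nonpositive. -/

open Set

lemma abs_two_mul_sub_one_le_one {x : ℝ} (hx : x ∈ Icc (0 : ℝ) 1) : |2 * x - 1| ≤ 1 :=
  abs_le.2 ⟨by linarith [hx.1], by linarith [hx.2]⟩

lemma one_sub_add_mul_pos {w p : ℝ} (hw : w < 1 / 2) (hp : |p| ≤ 1) : 0 < 1 - w + w * p := by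
  obtain ⟨hp₁, hp₂⟩ := abs_le.1 hp
  rcases le_or_gt 0 w with hw₀ | hw₀
  · nlinarith [mul_le_mul_of_nonneg_left hp₁ hw₀]
  · nlinarith [mul_le_mul_of_nonpos_left hp₂ hw₀.le]

lemma fitness_div_sub_fitness_div (w u v d : ℝ) :
    (1 - w + w * u) / (2 * d) - (1 - w + w * v) / (2 * d) = w * ((u - v) / 2) / d := by
  ring

lemma div_add_mul_sub_div_add_mul_neg {c w p : ℝ} (hplus : c + w * p ≠ 0)
    (hminus : c + w * -p ≠ 0) :
    w * p / (c + w * p) - w * p / (c + w * -p) =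
      -(2 * w ^ 2 * p * p) / (c ^ 2 - w ^ 2 * p ^ 2) := by
  have hprod : c ^ 2 - w ^ 2 * p ^ 2 = (c + w * p) * (c + w * -p) := by ring
  rw [div_sub_div _ _ hplus hminus, hprod]
  ring

theorem moran_phi_diff_general (w x y : ℝ) (hw : w < 1 / 2)
    (hx : x ∈ Set.Icc (0:ℝ) 1) (hy : y ∈ Set.Icc (0:ℝ) 1) :
    ((2 * x - 1) *
        ((1 - w + w * (2 * y - 1)) / (2 * (1 - w + w * ((2 * x - 1) * (2 * y - 1))))
          - (1 - w + w * (1 - 2 * y)) / (2 * (1 - w + w * ((2 * x - 1) * (2 * y - 1)))))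
      + (2 * y - 1) *
        ((1 - w + w * (1 - 2 * x)) / (2 * (1 - w + w * (-((2 * x - 1) * (2 * y - 1)))))
          - (1 - w + w * (2 * x - 1)) / (2 * (1 - w + w * (-((2 * x - 1) * (2 * y - 1)))))))
      = -(2 * w ^ 2 * ((2 * x - 1) * (2 * y - 1)) * ((2 * x - 1) * (2 * y - 1)))
          / ((1 - w) ^ 2 - w ^ 2 * ((2 * x - 1) * (2 * y - 1)) ^ 2) ∧
    -(2 * w ^ 2 * ((2 * x - 1) * (2 * y - 1)) * ((2 * x - 1) * (2 * y - 1)))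
        / ((1 - w) ^ 2 - w ^ 2 * ((2 * x - 1) * (2 * y - 1)) ^ 2)
      = -(2 * w ^ 2 * (2 * x - 1) ^ 2 * (2 * y - 1) ^ 2)
          / ((1 - w) ^ 2 - w ^ 2 * (2 * x - 1) ^ 2 * (2 * y - 1) ^ 2) ∧
    -(2 * w ^ 2 * (2 * x - 1) ^ 2 * (2 * y - 1) ^ 2)
        / ((1 - w) ^ 2 - w ^ 2 * (2 * x - 1) ^ 2 * (2 * y - 1) ^ 2) ≤ 0 := by
  set p := (2 * x - 1) * (2 * y - 1) with hp_def
  have hp : |p| ≤ 1 := by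
    rw [abs_mul]
    exact mul_le_one₀ (abs_two_mul_sub_one_le_one hx) (abs_nonneg _)
      (abs_two_mul_sub_one_le_one hy)
  have hplus : 0 < 1 - w + w * p := one_sub_add_mul_pos hw hp
  have hminus : 0 < 1 - w + w * -p := one_sub_add_mul_pos hw (by rwa [abs_neg])
  have hden : 0 < (1 - w) ^ 2 - w ^ 2 * (2 * x - 1) ^ 2 * (2 * y - 1) ^ 2 :=
    calc 0 < (1 - w + w * p) * (1 - w + w * -p) := mul_pos hplus hminus
      _ = _ := by ring
  refine ⟨?_, by ring, div_nonpos_of_nonpos_of_nonneg (neg_nonpos.2 (by positivity)) hden.le⟩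
  calc _ = w * p / (1 - w + w * p) - w * p / (1 - w + w * -p) := by
        rw [fitness_div_sub_fitness_div, fitness_div_sub_fitness_div, hp_def]
        ring
    _ = _ := div_add_mul_sub_div_add_mul_neg hplus.ne' hminus.ne'

/-- For the frequency-dependent Moran process, the order-1/N integrand satisfies
(2x-1)(Φ_A^♂−Φ_B^♂)+(2y-1)(Φ_A^♀−Φ_B^♀)
 = −2w²⟨π^♂⟩(2x-1)(2y-1)/((1−w)²−w²⟨π^♂⟩²)
 = −2w²(2x-1)²(2y-1)²/((1−w)²−w²(2x-1)²(2y-1)²) ≤ 0 on [0,1]² for 0 < w < 1/2. -/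
theorem moran_phi_diff (w x y : ℝ) (hw0 : 0 < w) (hw : w < 1 / 2)
    (hx : x ∈ Set.Icc (0:ℝ) 1) (hy : y ∈ Set.Icc (0:ℝ) 1) :
    ((2 * x - 1) *
        ((1 - w + w * (2 * y - 1)) / (2 * (1 - w + w * ((2 * x - 1) * (2 * y - 1))))
          - (1 - w + w * (1 - 2 * y)) / (2 * (1 - w + w * ((2 * x - 1) * (2 * y - 1)))))
      + (2 * y - 1) *
        ((1 - w + w * (1 - 2 * x)) / (2 * (1 - w + w * (-((2 * x - 1) * (2 * y - 1)))))
          - (1 - w + w * (2 * x - 1)) / (2 * (1 - w + w * (-((2 * x - 1) * (2 * y - 1)))))))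
      = -(2 * w ^ 2 * ((2 * x - 1) * (2 * y - 1)) * ((2 * x - 1) * (2 * y - 1)))
          / ((1 - w) ^ 2 - w ^ 2 * ((2 * x - 1) * (2 * y - 1)) ^ 2) ∧
    -(2 * w ^ 2 * ((2 * x - 1) * (2 * y - 1)) * ((2 * x - 1) * (2 * y - 1)))
        / ((1 - w) ^ 2 - w ^ 2 * ((2 * x - 1) * (2 * y - 1)) ^ 2)
      = -(2 * w ^ 2 * (2 * x - 1) ^ 2 * (2 * y - 1) ^ 2)
          / ((1 - w) ^ 2 - w ^ 2 * (2 * x - 1) ^ 2 * (2 * y - 1) ^ 2) ∧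
    -(2 * w ^ 2 * (2 * x - 1) ^ 2 * (2 * y - 1) ^ 2)
        / ((1 - w) ^ 2 - w ^ 2 * (2 * x - 1) ^ 2 * (2 * y - 1) ^ 2) ≤ 0 :=
  moran_phi_diff_general w x y hw hx hy
end

section
/- The function H(x,y) = -x(1-x)y(1-y) is a constant of motion for the Battle of the Sexes replicator dynamics ẋ = x(1-x)·2(2y-1), ẏ = -y(1-y)·2(2x-1): along any solution, d/dt H(x(t),y(t)) = 0. -/
/-!
With `H(x, y) = -x(1-x)y(1-y)` one has `∂H/∂x = (2x-1)y(1-y)` and `∂H/∂y = x(1-x)(2y-1)`,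
so the dynamics is Hamiltonian up to the factor 2: `ẋ = 2 ∂H/∂y`, `ẏ = -2 ∂H/∂x`.
Along any Hamiltonian flow the chain rule gives `dH/dt = ∂H/∂x · ẋ + ∂H/∂y · ẏ = 0`.
-/

open ContinuousLinearMap

theorem HasFDerivAt.hasDerivAt_comp_hamiltonian_flow {H : ℝ × ℝ → ℝ} {H' : ℝ × ℝ →L[ℝ] ℝ}
    {γ : ℝ → ℝ × ℝ} {t : ℝ} (c : ℝ) (hH : HasFDerivAt H H' (γ t))
    (hγ : HasDerivAt γ (c • (H' (0, 1), -H' (1, 0))) t) :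
    HasDerivAt (H ∘ γ) 0 t := by
  have hsplit : ∀ a b : ℝ, H' (a, b) = a * H' (1, 0) + b * H' (0, 1) := by
    intro a b
    have : ((a, b) : ℝ × ℝ) = a • (1, 0) + b • (0, 1) := by ext <;> simp
    rw [this, map_add, map_smul, map_smul, smul_eq_mul, smul_eq_mul]
  refine (hH.comp_hasDerivAt t hγ).congr_deriv ?_
  rw [Prod.smul_mk, hsplit]
  simp only [smul_eq_mul]
  ring

noncomputable def battleHamiltonian (p : ℝ × ℝ) : ℝ := -(p.1 * (1 - p.1) * p.2 * (1 - p.2))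

noncomputable def battleHamiltonianFDeriv (p : ℝ × ℝ) : ℝ × ℝ →L[ℝ] ℝ :=
  ((2 * p.1 - 1) * p.2 * (1 - p.2)) • fst ℝ ℝ ℝ + (p.1 * (1 - p.1) * (2 * p.2 - 1)) • snd ℝ ℝ ℝ

theorem hasFDerivAt_battleHamiltonian (p : ℝ × ℝ) :
    HasFDerivAt battleHamiltonian (battleHamiltonianFDeriv p) p := by
  have h1 := hasFDerivAt_fst (𝕜 := ℝ) (p := p)
  have h2 := hasFDerivAt_snd (𝕜 := ℝ) (p := p)
  refine ((((h1.mul ((hasFDerivAt_const 1 p).sub h1)).mul h2).mul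
    ((hasFDerivAt_const 1 p).sub h2)).neg).congr_fderiv ?_
  refine ContinuousLinearMap.ext fun v => ?_
  simp only [battleHamiltonianFDeriv, neg_apply, add_apply, smul_apply, sub_apply, zero_apply,
    coe_fst', coe_snd', Pi.mul_apply, Pi.sub_apply, smul_eq_mul]
  ring

/-- H(x,y) = −x(1−x)y(1−y) is a constant of motion for the Battle of the Sexes
replicator dynamics ẋ = 2x(1−x)(2y−1), ẏ = −2y(1−y)(2x−1). -/
theorem H_constant_of_motion (x y : ℝ → ℝ)
    (hx : ∀ t : ℝ, HasDerivAt x (2 * x t * (1 - x t) * (2 * y t - 1)) t)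
    (hy : ∀ t : ℝ, HasDerivAt y (-(2 * y t * (1 - y t) * (2 * x t - 1))) t) :
    ∀ t : ℝ, HasDerivAt (fun t => -(x t * (1 - x t) * y t * (1 - y t))) 0 t := by
  intro t
  set H' := battleHamiltonianFDeriv (x t, y t)
  have hflow : HasDerivAt (fun s => (x s, y s)) ((2 : ℝ) • (H' (0, 1), -H' (1, 0))) t := by
    refine ((hx t).prodMk (hy t)).congr_deriv ?_
    simp only [H', battleHamiltonianFDeriv, add_apply, smul_apply, coe_fst', coe_snd', smul_eq_mul,
      Prod.smul_mk, Prod.mk.injEq]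
    constructor <;> ring
  exact (hasFDerivAt_battleHamiltonian (x t, y t)).hasDerivAt_comp_hamiltonian_flow
    (γ := fun s => (x s, y s)) 2 hflow
end

section
/- For the adjusted replicator dynamics of the Battle of the Sexes, ẋ = 2x(1-x)(2y-1)/(c + (2x-1)(2y-1)), ẏ = -2y(1-y)(2x-1)/(c - (2x-1)(2y-1)) with c = (1-w)/w > 1, the time derivative of H(x,y) = -x(1-x)y(1-y) along trajectories in the open unit square satisfies dH/dt ≤ 0, with equality only when (2x-1)(2y-1) = 0. -/
/-!
With `u = (2x-1)(2y-1)` and `P = x(1-x)y(1-y)`, the two terms of `dH/dt` are `2uP/(c+u)` and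
`-2uP/(c-u)`, whose sum is `-4u²P/(c²-u²)`. In the open unit square `P > 0` and `|u| < 1 < c`,
so this is `≤ 0`, and it vanishes exactly when `u = 0`.
-/

lemma abs_two_mul_sub_one_lt_one {x : ℝ} (hx : x ∈ Set.Ioo (0 : ℝ) 1) : |2 * x - 1| < 1 :=
  abs_lt.2 ⟨by linarith [hx.1], by linarith [hx.2]⟩

lemma abs_two_mul_sub_one_mul_lt_one {x y : ℝ} (hx : x ∈ Set.Ioo (0 : ℝ) 1)
    (hy : y ∈ Set.Ioo (0 : ℝ) 1) : |(2 * x - 1) * (2 * y - 1)| < 1 := by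
  rw [abs_mul]
  exact mul_lt_one_of_nonneg_of_lt_one_left (abs_nonneg _)
    (abs_two_mul_sub_one_lt_one hx) (abs_two_mul_sub_one_lt_one hy).le

lemma mul_one_sub_mul_mul_one_sub_pos {x y : ℝ} (hx : x ∈ Set.Ioo (0 : ℝ) 1)
    (hy : y ∈ Set.Ioo (0 : ℝ) 1) : 0 < x * (1 - x) * (y * (1 - y)) :=
  mul_pos (mul_pos hx.1 (sub_pos.2 hx.2)) (mul_pos hy.1 (sub_pos.2 hy.2))

section Flux

variable {c u P : ℝ}

lemma sq_sub_sq_pos_of_abs_lt (hu : |u| < c) : 0 < c ^ 2 - u ^ 2 :=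
  sub_pos.2 (sq_lt_sq' (abs_lt.1 hu).1 (abs_lt.1 hu).2)

lemma two_mul_div_add_sub_two_mul_div_sub_eq (hu : |u| < c) :
    2 * u * P / (c + u) - 2 * u * P / (c - u) = -(4 * u ^ 2 * P / (c ^ 2 - u ^ 2)) := by
  obtain ⟨hlo, hhi⟩ := abs_lt.1 hu
  have hplus : c + u ≠ 0 := by linarith
  have hminus : c - u ≠ 0 := by linarith
  have hsq : c ^ 2 - u ^ 2 ≠ 0 := (sq_sub_sq_pos_of_abs_lt hu).ne'
  field_simp
  ring

lemma two_mul_div_add_sub_two_mul_div_sub_nonpos (hP : 0 ≤ P) (hu : |u| < c) :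
    2 * u * P / (c + u) - 2 * u * P / (c - u) ≤ 0 := by
  rw [two_mul_div_add_sub_two_mul_div_sub_eq hu, neg_nonpos]
  have := sq_sub_sq_pos_of_abs_lt hu
  positivity

lemma eq_zero_of_two_mul_div_add_sub_two_mul_div_sub_eq_zero (hP : 0 < P) (hu : |u| < c)
    (h : 2 * u * P / (c + u) - 2 * u * P / (c - u) = 0) : u = 0 := by
  have hsq : c ^ 2 - u ^ 2 ≠ 0 := (sq_sub_sq_pos_of_abs_lt hu).ne'
  rw [two_mul_div_add_sub_two_mul_div_sub_eq hu, neg_eq_zero, div_eq_zero_iff, or_iff_left hsq,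
    mul_eq_zero, or_iff_left hP.ne', mul_eq_zero, or_iff_right (by norm_num)] at h
  exact pow_eq_zero_iff two_ne_zero |>.1 h

end Flux

/-- Along trajectories of the adjusted replicator dynamics of the Battle of the Sexes
(with c = (1−w)/w > 1), dH/dt = ∂H/∂x·ẋ + ∂H/∂y·ẏ ≤ 0 in the open unit square,
with equality only when (2x−1)(2y−1) = 0. -/
theorem adjusted_replicator_H_decreases (c x y : ℝ) (hc : 1 < c)
    (hx : x ∈ Set.Ioo (0:ℝ) 1) (hy : y ∈ Set.Ioo (0:ℝ) 1) :
    ((2 * x - 1) * (y * (1 - y))) *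
        (2 * x * (1 - x) * (2 * y - 1) / (c + (2 * x - 1) * (2 * y - 1)))
      + ((2 * y - 1) * (x * (1 - x))) *
        (-(2 * y * (1 - y) * (2 * x - 1)) / (c - (2 * x - 1) * (2 * y - 1))) ≤ 0 ∧
    (((2 * x - 1) * (y * (1 - y))) *
        (2 * x * (1 - x) * (2 * y - 1) / (c + (2 * x - 1) * (2 * y - 1)))
      + ((2 * y - 1) * (x * (1 - x))) *
        (-(2 * y * (1 - y) * (2 * x - 1)) / (c - (2 * x - 1) * (2 * y - 1))) = 0 →
      (2 * x - 1) * (2 * y - 1) = 0) := by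
  set u := (2 * x - 1) * (2 * y - 1)
  set P := x * (1 - x) * (y * (1 - y))
  have hu : |u| < c := (abs_two_mul_sub_one_mul_lt_one hx hy).trans hc
  have hP : 0 < P := mul_one_sub_mul_mul_one_sub_pos hx hy
  have hflux : ((2 * x - 1) * (y * (1 - y))) * (2 * x * (1 - x) * (2 * y - 1) / (c + u))
      + ((2 * y - 1) * (x * (1 - x))) * (-(2 * y * (1 - y) * (2 * x - 1)) / (c - u))
      = 2 * u * P / (c + u) - 2 * u * P / (c - u) := by
    simp only [u, P]; ring
  rw [hflux]
  exact ⟨two_mul_div_add_sub_two_mul_div_sub_nonpos hP.le hu, eq_zero_of_two_mul_div_add_sub_two_mul_div_sub_eq_zero hP hu⟩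
end
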